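/- arXiv:1409.5571 — 8 statements merged into one kernel-verified Lean document; each statement's English description precedes it below -/
import Mathlib

section
/- Let A be a semiprime algebra and Δ : A → A an additive 2-local derivation. Then Δ is a derivation. -/
def IsDerivation {A : Type*} [Ring A] [Algebra ℂ A] (D : A → A) : Prop :=
  (∀ x y : A, D (x + y) = D x + D y) ∧ (∀ (c : ℂ) (x : A), D (c • x) = c • D x) ∧
  (∀ x y : A, D (x * y) = D x * y + x * D y)

def Is2LocalDerivation {A : Type*} [Ring A] [Algebra ℂ A] (Δ : A → A) : Prop :=
  ∀ x y : A, ∃ D : A → A, IsDerivation D ∧ Δ x = D x ∧ Δ y = D y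

/-- A semiprime algebra: `aAa = 0` implies `a = 0`. -/
def IsSemiprime (A : Type*) [Ring A] : Prop :=
  ∀ a : A, (∀ x : A, a * x * a = 0) → a = 0

theorem additive_twoLocalDerivation_is_derivation {A : Type*} [Ring A] [Algebra ℂ A]
    (hsp : IsSemiprime A) (Δ : A → A) (hΔ : Is2LocalDerivation Δ)
    (hadd : ∀ x y : A, Δ (x + y) = Δ x + Δ y) :
    IsDerivation Δ := by
  -- homogeneity
  have hsmul : ∀ (c : ℂ) (x : A), Δ (c • x) = c • Δ x := by
    intro c x
    obtain ⟨D, hD, hx, hcx⟩ := hΔ x (c • x)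
    rw [hcx, hD.2.1, hx]
  -- 2-torsion-freeness
  have htwo : ∀ z w : A, z + z = w + w → z = w := by
    intro z w h
    have h2 : (2:ℂ) • z = (2:ℂ) • w := by rw [two_smul, two_smul]; exact h
    calc z = (2⁻¹:ℂ) • ((2:ℂ) • z) := by rw [smul_smul]; norm_num
      _ = (2⁻¹:ℂ) • ((2:ℂ) • w) := by rw [h2]
      _ = w := by rw [smul_smul]; norm_num
  have htwo0 : ∀ z : A, z + z = 0 → z = 0 := by
    intro z h
    refine htwo z 0 ?_
    simpa using h
  have hzero : Δ 0 = 0 := by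
    have h := hadd 0 0
    rw [add_zero] at h
    exact left_eq_add.mp h
  have hneg : ∀ z : A, Δ (-z) = -Δ z := by
    intro z
    have h := hadd z (-z)
    rw [add_neg_cancel, hzero] at h
    exact eq_neg_of_add_eq_zero_right h.symm
  have hsub : ∀ u v : A, Δ (u - v) = Δ u - Δ v := by
    intro u v
    rw [sub_eq_add_neg, hadd, hneg, ← sub_eq_add_neg]
  -- Jordan property
  have hJ : ∀ x : A, Δ (x * x) = Δ x * x + x * Δ x := by
    intro x
    obtain ⟨D, hD, hx, hxx⟩ := hΔ x (x * x)
    rw [hxx, hD.2.2, hx]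
  have hJ2 : ∀ x y : A, Δ (x*y) + Δ (y*x)
      = Δ x * y + x * Δ y + Δ y * x + y * Δ x := by
    intro x y
    have e : (x+y)*(x+y) = x*x + (x*y + y*x) + y*y := by noncomm_ring
    have k := hJ (x+y)
    rw [e] at k
    simp only [hadd] at k
    rw [hJ x, hJ y] at k
    linear_combination (norm := noncomm_ring) k
  have hba : ∀ a b : A, Δ (b*a)
      = Δ a * b + a * Δ b + Δ b * a + b * Δ a - Δ (a*b) := by
    intro a b
    linear_combination (norm := noncomm_ring) hJ2 a b
  -- Cusack/Brešar: Δ(aba)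
  have hL1 : ∀ a b : A, Δ (a*b*a) = Δ a * b * a + a * Δ b * a + a * b * Δ a := by
    intro a b
    have e : a*(a*b+b*a) + (a*b+b*a)*a = (a*a*b + b*(a*a)) + (a*b*a + a*b*a) := by
      noncomm_ring
    have c1 := congrArg Δ e
    simp only [hadd] at c1
    rw [hJ2 a (a*b+b*a), hJ2 (a*a) b] at c1
    simp only [hadd] at c1
    rw [hJ2 a b, hJ a] at c1
    refine htwo _ _ ?_
    linear_combination (norm := noncomm_ring) -c1
  -- Δ(abc + cba)
  have hL2 : ∀ a b c : A, Δ (a*b*c) + Δ (c*b*a)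
      = Δ a * b * c + a * Δ b * c + a * b * Δ c
        + Δ c * b * a + c * Δ b * a + c * b * Δ a := by
    intro a b c
    have e : (a+c)*b*(a+c) = a*b*a + (a*b*c + c*b*a) + c*b*c := by noncomm_ring
    have c1 := congrArg Δ e
    rw [hL1 (a+c) b] at c1
    simp only [hadd] at c1
    rw [hL1 a b, hL1 c b] at c1
    linear_combination (norm := noncomm_ring) -c1
  -- the key anti-commuting identity for the defect B(a,b)
  have hB3 : ∀ a b x : A,
      (Δ (a*b) - Δ a * b - a * Δ b) * x * (b*a - a*b)
        + (b*a - a*b) * x * (Δ (a*b) - Δ a * b - a * Δ b) = 0 := by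
    intro a b x
    have e : (a*b)*x*(b*a) + (b*a)*x*(a*b) = a*(b*x*b)*a + b*(a*x*a)*b := by
      noncomm_ring
    have c1 := congrArg Δ e
    simp only [hadd] at c1
    rw [hL2 (a*b) x (b*a), hL1 a (b*x*b), hL1 b (a*x*a), hL1 b x, hL1 a x,
      hba a b] at c1
    linear_combination (norm := noncomm_ring) c1
  -- semiprime: flip lemma
  have hflip : ∀ p q : A, (∀ z : A, p*z*q = 0) → ∀ z : A, q*z*p = 0 := by
    intro p q h z
    apply hsp
    intro w
    have e : q*z*p*w*(q*z*p) = q*z*((p*w*q)*(z*p)) := by noncomm_ring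
    rw [e, h w]
    simp
  -- semiprime: G x H + H x G = 0 for all x implies G x H = 0
  have hGH : ∀ G H : A, (∀ z : A, G*z*H + H*z*G = 0) → ∀ z : A, G*z*H = 0 := by
    intro G H hyp
    have hneg' : ∀ z : A, H*z*G = -(G*z*H) := fun z =>
      eq_neg_of_add_eq_zero_right (hyp z)
    have step1 : ∀ u v : A, G*u*G*v*H = G*u*H*v*G := by
      intro u v
      have h1 := hyp (u*G*v)
      have h2 : H*u*G*v*G = (-(G*u*H))*v*G := by rw [hneg' u]
      linear_combination (norm := noncomm_ring) h1 - h2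
    have step2 : ∀ u v w : A, G*u*H*v*G*w*H = 0 := by
      intro u v w
      have h1 := step1 u (v*H*w)
      have h2 : G*u*G*v*H*w*H = G*u*H*v*G*w*H := by rw [step1 u v]
      have h3 : G*u*H*v*(H*w*G) = G*u*H*v*(-(G*w*H)) := by rw [hneg' w]
      apply htwo0
      linear_combination (norm := noncomm_ring) h1 - h2 + h3
    intro z
    apply hsp
    intro w
    have e : G*z*H*w*(G*z*H) = G*z*H*w*G*z*H := by noncomm_ring
    rw [e]
    exact step2 z w z
  -- elements annihilating all commutators are central
  have hcentral : ∀ t : A, (∀ z c e : A, t*z*(c*e - e*c) = 0) → ∀ s : A, t*s = s*t := by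
    intro t hT s
    have h0 : t*s - s*t = 0 := by
      apply hsp
      intro z
      have A1 := hT (s*z) t s
      have A2 : s*(t*z*(t*s - s*t)) = s*0 := by rw [hT z t s]
      linear_combination (norm := noncomm_ring) A1 - A2
    exact sub_eq_zero.mp h0
  -- additivity of the defect in each variable
  have hBadd2 : ∀ a b c : A, Δ (a*(b+c)) - Δ a * (b+c) - a * Δ (b+c)
      = (Δ (a*b) - Δ a * b - a * Δ b) + (Δ (a*c) - Δ a * c - a * Δ c) := by
    intro a b c
    have e : a*(b+c) = a*b + a*c := by noncomm_ring
    rw [e, hadd, hadd]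
    noncomm_ring
  have hBadd1 : ∀ a e b : A, Δ ((a+e)*b) - Δ (a+e) * b - (a+e) * Δ b
      = (Δ (a*b) - Δ a * b - a * Δ b) + (Δ (e*b) - Δ e * b - e * Δ b) := by
    intro a e b
    have e' : (a+e)*b = a*b + e*b := by noncomm_ring
    rw [e', hadd, hadd]
    noncomm_ring
  -- P1 : B(a,b) x [b,a] = 0
  have P1 : ∀ a b z : A, (Δ (a*b) - Δ a * b - a * Δ b) * z * (b*a - a*b) = 0 :=
    fun a b => hGH _ _ (hB3 a b)
  have P1' : ∀ a b z : A, (b*a - a*b) * z * (Δ (a*b) - Δ a * b - a * Δ b) = 0 :=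
    fun a b => hflip _ _ (P1 a b)
  -- P2 : B(a,b) x [c,a] = 0
  have P2 : ∀ a b c z : A,
      (Δ (a*b) - Δ a * b - a * Δ b) * z * (c*a - a*c) = 0 := by
    intro a b c z
    have hQ : (Δ (a*b) - Δ a * b - a * Δ b) * z * (c*a - a*c)
        = -((Δ (a*c) - Δ a * c - a * Δ c) * z * (b*a - a*b)) := by
      have h1 := P1 a (b+c) z
      rw [hBadd2 a b c] at h1
      have h2 := P1 a b z
      have h3 := P1 a c z
      linear_combination (norm := noncomm_ring) h1 - h2 - h3
    apply hsp
    intro w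
    nth_rewrite 1 [hQ]
    have e : (-((Δ (a*c) - Δ a * c - a * Δ c) * z * (b*a - a*b))) * w *
          ((Δ (a*b) - Δ a * b - a * Δ b) * z * (c*a - a*c))
        = -(((Δ (a*c) - Δ a * c - a * Δ c) * z) *
            ((b*a - a*b) * w * (Δ (a*b) - Δ a * b - a * Δ b)) * (z * (c*a - a*c))) := by
      noncomm_ring
    rw [e, P1' a b w]
    simp
  have P2' : ∀ a b c z : A,
      (c*a - a*c) * z * (Δ (a*b) - Δ a * b - a * Δ b) = 0 :=
    fun a b c => hflip _ _ (P2 a b c)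
  -- P3 : B(a,b) x [c,e] = 0 for all c, e
  have P3 : ∀ a b c e z : A,
      (Δ (a*b) - Δ a * b - a * Δ b) * z * (c*e - e*c) = 0 := by
    intro a b c e z
    have hQ : (Δ (a*b) - Δ a * b - a * Δ b) * z * (c*e - e*c)
        = -((Δ (e*b) - Δ e * b - e * Δ b) * z * (c*a - a*c)) := by
      have h1 := P2 (a+e) b c z
      rw [hBadd1 a e b] at h1
      have h2 := P2 a b c z
      have h3 := P2 e b c z
      linear_combination (norm := noncomm_ring) h1 - h2 - h3
    apply hsp
    intro w
    nth_rewrite 1 [hQ]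
    have e' : (-((Δ (e*b) - Δ e * b - e * Δ b) * z * (c*a - a*c))) * w *
          ((Δ (a*b) - Δ a * b - a * Δ b) * z * (c*e - e*c))
        = -(((Δ (e*b) - Δ e * b - e * Δ b) * z) *
            ((c*a - a*c) * w * (Δ (a*b) - Δ a * b - a * Δ b)) * (z * (c*e - e*c))) := by
      noncomm_ring
    rw [e', P2' a b c w]
    simp
  refine ⟨hadd, hsmul, ?_⟩
  intro x y
  obtain ⟨D, hD, hsum, hcomm⟩ := hΔ (x + y) (x*y - y*x)
  have hDneg : ∀ z : A, D (-z) = -D z := by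
    intro z
    have h := hD.2.1 (-1 : ℂ) z
    simpa [neg_smul, one_smul] using h
  have hDsub : ∀ u v : A, D (u - v) = D u - D v := by
    intro u v
    rw [sub_eq_add_neg, hD.1, hDneg, ← sub_eq_add_neg]
  have hDy : D y = Δ x + Δ y - D x := by
    have h := hsum
    rw [hadd, hD.1] at h
    linear_combination (norm := noncomm_ring) -h
  have hK : (Δ (x*y) - Δ x * y - x * Δ y) + (Δ (x*y) - Δ x * y - x * Δ y)
      = (D x - Δ x) * (x + y) - (x + y) * (D x - Δ x) := by
    have h := hcomm
    rw [hsub, hDsub, hD.2.2, hD.2.2, hDy] at h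
    linear_combination (norm := noncomm_ring) h + hJ2 x y
  have hT : ∀ z c e : A, (Δ (x*y) - Δ x * y - x * Δ y) * z * (c*e - e*c) = 0 :=
    fun z c e => P3 x y c e z
  have hcent := hcentral _ hT
  have hT1 : ∀ c e : A, (Δ (x*y) - Δ x * y - x * Δ y) * (c*e - e*c) = 0 := by
    intro c e
    have h := hT 1 c e
    rwa [mul_one] at h
  have htt : (Δ (x*y) - Δ x * y - x * Δ y) * (Δ (x*y) - Δ x * y - x * Δ y) = 0 := by
    apply htwo0
    have h2 : (Δ (x*y) - Δ x * y - x * Δ y) *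
          ((Δ (x*y) - Δ x * y - x * Δ y) + (Δ (x*y) - Δ x * y - x * Δ y))
        = (Δ (x*y) - Δ x * y - x * Δ y) *
          ((D x - Δ x) * (x + y) - (x + y) * (D x - Δ x)) := by
      rw [hK]
    have h3 := hT1 (D x - Δ x) (x + y)
    linear_combination (norm := noncomm_ring) h2 + h3
  have ht0 : (Δ (x*y) - Δ x * y - x * Δ y) = 0 := by
    apply hsp
    intro z
    rw [hcent z, mul_assoc, htt, mul_zero]
  linear_combination (norm := noncomm_ring) ht0
end

section
/- Let A be a ring, and suppose Δ : A → A is a map such that for any two elements x, y ∈ A there exists a ∈ A with Δ(x) = ax − xa and Δ(y) = ay − ya. If e and f are orthogonal idempotents in A (ef = fe = 0), then Δ(e + f) = Δ(e) + Δ(f). -/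
theorem twoLocalInner_additive_on_orthogonal_idempotents {A : Type*} [Ring A]
    (Δ : A → A)
    (hΔ : ∀ x y : A, ∃ a : A, Δ x = a * x - x * a ∧ Δ y = a * y - y * a)
    (e f : A) (he : IsIdempotentElem e) (hf : IsIdempotentElem f)
    (hef : e * f = 0) (hfe : f * e = 0) :
    Δ (e + f) = Δ e + Δ f := by
  obtain ⟨a, ha1, ha2⟩ := hΔ (e + f) e
  obtain ⟨b, hb1, hb2⟩ := hΔ (e + f) f
  obtain ⟨c, hc1, hc2⟩ := hΔ e f
  have he' : e * e = e := he
  have hf' : f * f = f := hf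
  have he2 : ∀ x : A, e * (e * x) = e * x := fun x => by rw [← mul_assoc, he']
  have hf2 : ∀ x : A, f * (f * x) = f * x := fun x => by rw [← mul_assoc, hf']
  have hef2 : ∀ x : A, e * (f * x) = 0 := fun x => by rw [← mul_assoc, hef, zero_mul]
  have hfe2 : ∀ x : A, f * (e * x) = 0 := fun x => by rw [← mul_assoc, hfe, zero_mul]
  set u := a - c with hu
  set v := b - c with hv
  have hue : u * e = e * u := by
    have h : a * e - e * a = c * e - e * c := ha2.symm.trans hc1
    have h2 : u * e - e * u = (a * e - e * a) - (c * e - e * c) := by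
      rw [hu]; noncomm_ring
    rw [h, sub_self] at h2
    exact sub_eq_zero.mp h2
  have hvf : v * f = f * v := by
    have h : b * f - f * b = c * f - f * c := hb2.symm.trans hc2
    have h2 : v * f - f * v = (b * f - f * b) - (c * f - f * c) := by
      rw [hv]; noncomm_ring
    rw [h, sub_self] at h2
    exact sub_eq_zero.mp h2
  have huv : u * (e + f) - (e + f) * u = v * (e + f) - (e + f) * v := by
    have h : a * (e + f) - (e + f) * a = b * (e + f) - (e + f) * b := ha1.symm.trans hb1
    have h2 : (u * (e + f) - (e + f) * u) - (v * (e + f) - (e + f) * v)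
        = (a * (e + f) - (e + f) * a) - (b * (e + f) - (e + f) * b) := by
      rw [hu, hv]; noncomm_ring
    rw [h, sub_self] at h2
    exact sub_eq_zero.mp h2
  set D := u * f - f * u with hD
  have hDus : D = u * (e + f) - (e + f) * u := by
    rw [hD, mul_add, add_mul, hue]; abel
  have hD1 : D = v * e - e * v := by
    rw [hDus, huv, mul_add, add_mul, hvf]; abel
  -- corner computations
  have L1 : D = D * e + e * D := by
    rw [hD1]
    simp only [mul_sub, sub_mul, mul_assoc, he', he2, hef2, hfe2, mul_zero, zero_mul]
    abel
  have L2 : D = D * f + f * D := by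
    rw [hD]
    simp only [mul_sub, sub_mul, mul_assoc, hf', hf2, hef2, hfe2, mul_zero, zero_mul]
    abel
  have L3 : D * f * e = 0 := by
    rw [hD]
    simp only [mul_sub, sub_mul, mul_assoc, hf', hfe, hf2, hef2, hfe2, mul_zero, zero_mul]
    abel
  have L4 : D * e * f = 0 := by
    rw [hD1]
    simp only [mul_sub, sub_mul, mul_assoc, he', hef, he2, hef2, hfe2, mul_zero, zero_mul]
    abel
  have L5 : e * D = e * D * f := by
    nth_rewrite 1 [L2]
    rw [mul_add, ← mul_assoc, ← mul_assoc, hef, zero_mul, add_zero]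
  have L6 : f * D = f * D * e := by
    nth_rewrite 1 [L1]
    rw [mul_add, ← mul_assoc, ← mul_assoc, hfe, zero_mul, add_zero]
  have L7 : D * e = f * D := by
    nth_rewrite 1 [L2]
    rw [add_mul, L3, ← L6, zero_add]
  have L8 : D * f = e * D := by
    nth_rewrite 1 [L1]
    rw [add_mul, L4, ← L5, zero_add]
  have L9 : D = (e + f) * D := by
    calc D = D * e + e * D := L1
    _ = f * D + e * D := by rw [L7]
    _ = (e + f) * D := by rw [add_mul]; exact add_comm _ _
  have L10 : D = D * (e + f) := by
    calc D = D * f + f * D := L2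
    _ = D * f + D * e := by rw [← L7]
    _ = D * (e + f) := by rw [mul_add]; exact add_comm _ _
  have hss : (e + f) * (e + f) = e + f := by
    rw [mul_add, add_mul, add_mul, he', hf', hef, hfe]; abel
  have hss2 : ∀ x : A, (e + f) * ((e + f) * x) = (e + f) * x := fun x => by
    rw [← mul_assoc, hss]
  have L11 : (e + f) * D * (e + f) = 0 := by
    rw [hDus]
    simp only [mul_sub, sub_mul, mul_assoc, hss, hss2, mul_zero, zero_mul]
    abel
  have hD0 : D = 0 := by
    calc D = (e + f) * D := L9
    _ = (e + f) * (D * (e + f)) := by rw [← L10]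
    _ = (e + f) * D * (e + f) := (mul_assoc _ _ _).symm
    _ = 0 := L11
  -- conclude
  have hcomm : a * f - f * a = c * f - f * c := by
    have h2 : (a * f - f * a) - (c * f - f * c) = D := by
      rw [hD, hu]; noncomm_ring
    rw [hD0] at h2
    exact sub_eq_zero.mp h2
  rw [ha1, ha2, hc2]
  calc a * (e + f) - (e + f) * a = (a * e - e * a) + (a * f - f * a) := by noncomm_ring
  _ = (a * e - e * a) + (c * f - f * c) := by rw [hcomm]
end

section
/- Let A be a complex algebra and Δ : A → A a map such that for every x, y ∈ A there exists a ∈ A with Δ(x) = ax − xa and Δ(y) = ay − ya. Then for any orthogonal idempotents e, f in A and complex scalars λ, μ one has Δ(λe + μf) = λΔ(e) + μΔ(f). -/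
theorem twoLocalInner_linear_on_two_orthogonal_idempotents {A : Type*} [Ring A]
    [Algebra ℂ A] (Δ : A → A)
    (hΔ : ∀ x y : A, ∃ a : A, Δ x = a * x - x * a ∧ Δ y = a * y - y * a)
    (e f : A) (he : IsIdempotentElem e) (hf : IsIdempotentElem f)
    (hef : e * f = 0) (hfe : f * e = 0) (lam mu : ℂ) :
    Δ (lam • e + mu • f) = lam • Δ e + mu • Δ f := by
  obtain ⟨d, hd1, hd2⟩ := hΔ e f
  obtain ⟨a, ha1, ha2⟩ := hΔ (lam • e + mu • f) e
  obtain ⟨b, hb1, hb2⟩ := hΔ (lam • e + mu • f) f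
  have h1 : a * e - e * a - (d * e - e * d) = 0 :=
    sub_eq_zero_of_eq (ha2.symm.trans hd1)
  have h2 : b * f - f * b - (d * f - f * d) = 0 :=
    sub_eq_zero_of_eq (hb2.symm.trans hd2)
  have h3 : (a * (lam • e + mu • f) - (lam • e + mu • f) * a)
      - (b * (lam • e + mu • f) - (lam • e + mu • f) * b) = 0 :=
    sub_eq_zero_of_eq (ha1.symm.trans hb1)
  -- the fundamental relation: w := mu • [a-d, f] equals lam • [b-d, e]
  have hw : mu • ((a - d) * f - f * (a - d)) = lam • ((b - d) * e - e * (b - d)) := by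
    have comb : mu • ((a - d) * f - f * (a - d)) - lam • ((b - d) * e - e * (b - d)) =
        ((a * (lam • e + mu • f) - (lam • e + mu • f) * a)
          - (b * (lam • e + mu • f) - (lam • e + mu • f) * b))
        - lam • (a * e - e * a - (d * e - e * d))
        + mu • (b * f - f * b - (d * f - f * d)) := by
      simp only [mul_add, add_mul, mul_sub, sub_mul, smul_mul_assoc, mul_smul_comm]
      module
    rw [h1, h2, h3, smul_zero, smul_zero, sub_zero, add_zero] at comb
    exact sub_eq_zero.mp comb
  -- [b-d, f] = 0
  have hc2 : (b - d) * f = f * (b - d) := by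
    have hc : (b - d) * f - f * (b - d) = (b * f - f * b) - (d * f - f * d) := by
      noncomm_ring
    rw [show (b * f - f * b) - (d * f - f * d) = 0 from h2] at hc
    exact sub_eq_zero.mp hc
  -- w * f = 0 and f * w = 0
  have hwf : (lam • ((b - d) * e - e * (b - d))) * f = 0 := by
    have : ((b - d) * e - e * (b - d)) * f = 0 := by
      calc ((b - d) * e - e * (b - d)) * f
          = (b - d) * (e * f) - e * ((b - d) * f) := by noncomm_ring
        _ = (b - d) * (e * f) - (e * f) * (b - d) := by rw [hc2]; noncomm_ring
        _ = 0 := by rw [hef]; noncomm_ring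
    rw [smul_mul_assoc, this, smul_zero]
  have hfw : f * (lam • ((b - d) * e - e * (b - d))) = 0 := by
    have : f * ((b - d) * e - e * (b - d)) = 0 := by
      calc f * ((b - d) * e - e * (b - d))
          = (f * (b - d)) * e - (f * e) * (b - d) := by noncomm_ring
        _ = (b - d) * (f * e) - (f * e) * (b - d) := by rw [← hc2]; noncomm_ring
        _ = 0 := by rw [hfe]; noncomm_ring
    rw [mul_smul_comm, this, smul_zero]
  -- hence w = 0
  have hw0 : mu • ((a - d) * f - f * (a - d)) = 0 := by
    have hff : f * f = f := hf
    have hsplit : mu • ((a - d) * f - f * (a - d)) =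
        (mu • ((a - d) * f - f * (a - d))) * f + f * (mu • ((a - d) * f - f * (a - d))) := by
      rw [smul_mul_assoc, mul_smul_comm, ← smul_add]
      congr 1
      calc (a - d) * f - f * (a - d)
          = (a - d) * (f * f) - (f * f) * (a - d) := by rw [hff]
        _ = ((a - d) * f - f * (a - d)) * f + f * ((a - d) * f - f * (a - d)) := by
            noncomm_ring
    rw [hsplit, hw, hwf, hfw, add_zero]
  -- conclude
  rw [ha1, hd1, hd2]
  have final : a * (lam • e + mu • f) - (lam • e + mu • f) * a
      - (lam • (d * e - e * d) + mu • (d * f - f * d)) =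
      lam • (a * e - e * a - (d * e - e * d)) + mu • ((a - d) * f - f * (a - d)) := by
    simp only [mul_add, add_mul, mul_sub, sub_mul, smul_mul_assoc, mul_smul_comm]
    module
  rw [h1, hw0, smul_zero, add_zero] at final
  exact sub_eq_zero.mp final
end

section
/- Let A be a complex algebra and Δ : A → A a map such that for every x, y ∈ A there exists a ∈ A with Δ(x) = ax − xa and Δ(y) = ay − ya. Then for any finite family e₁, …, e_m of pairwise orthogonal idempotents in A and complex numbers λ₁, …, λ_m, Δ(λ₁e₁ + ⋯ + λ_m e_m) = λ₁Δ(e₁) + ⋯ + λ_mΔ(e_m). -/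
private lemma corner_eq {A : Type*} [Ring A] [Algebra ℂ A] (u v a z : A) (α β : ℂ)
    (hu : u * z = α • u) (hv : z * v = β • v) :
    u * (a * z - z * a) * v = (β - α) • (u * (a * v)) := by
  have h : u * (a * z - z * a) * v = u * a * (z * v) - u * z * (a * v) := by noncomm_ring
  rw [h, hu, hv, mul_smul_comm, smul_mul_assoc, sub_smul, mul_assoc]

theorem twoLocalInner_linear_on_orthogonal_idempotents {A : Type*} [Ring A]
    [Algebra ℂ A] (Δ : A → A)
    (hΔ : ∀ x y : A, ∃ a : A, Δ x = a * x - x * a ∧ Δ y = a * y - y * a)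
    (m : ℕ) (e : Fin m → A) (he : ∀ i, IsIdempotentElem (e i))
    (horth : ∀ i j, i ≠ j → e i * e j = 0) (lam : Fin m → ℂ) :
    Δ (∑ i, lam i • e i) = ∑ i, lam i • Δ (e i) := by
  classical
  set x : A := ∑ i, lam i • e i with hxdef
  set R : A := ∑ i, lam i • Δ (e i) with hRdef
  -- orthogonality facts in scalar form
  have heeL : ∀ i k : Fin m, i ≠ k → e i * e k = (0:ℂ) • e i := by
    intro i k h; rw [zero_smul]; exact horth i k h
  have heeR : ∀ k j : Fin m, k ≠ j → e k * e j = (0:ℂ) • e j := by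
    intro k j h; rw [zero_smul]; exact horth k j h
  have h1 : ∀ i, e i * x = lam i • e i := by
    intro i
    rw [hxdef, Finset.mul_sum]
    rw [Finset.sum_eq_single i]
    · rw [mul_smul_comm, (he i).eq]
    · intro j _ hj
      rw [mul_smul_comm, horth i j (Ne.symm hj), smul_zero]
    · intro h; exact absurd (Finset.mem_univ i) h
  have h2 : ∀ i, x * e i = lam i • e i := by
    intro i
    rw [hxdef, Finset.sum_mul]
    rw [Finset.sum_eq_single i]
    · rw [smul_mul_assoc, (he i).eq]
    · intro j _ hj
      rw [smul_mul_assoc, horth j i hj, smul_zero]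
    · intro h; exact absurd (Finset.mem_univ i) h
  set p : A := ∑ i, e i with hpdef
  set q : A := 1 - p with hqdef
  have hep : ∀ i, e i * p = e i := by
    intro i
    rw [hpdef, Finset.mul_sum, Finset.sum_eq_single i]
    · exact (he i).eq
    · intro j _ hj; exact horth i j (Ne.symm hj)
    · intro h; exact absurd (Finset.mem_univ i) h
  have hpe : ∀ i, p * e i = e i := by
    intro i
    rw [hpdef, Finset.sum_mul, Finset.sum_eq_single i]
    · exact (he i).eq
    · intro j _ hj; exact horth j i hj
    · intro h; exact absurd (Finset.mem_univ i) h
  have heq0 : ∀ i, e i * q = (0:ℂ) • q := by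
    intro i; rw [hqdef, mul_sub, mul_one, hep, sub_self, zero_smul]
  have hqe0 : ∀ i, q * e i = (0:ℂ) • q := by
    intro i; rw [hqdef, sub_mul, one_mul, hpe, sub_self, zero_smul]
  have hxq : x * q = (0:ℂ) • q := by
    rw [hxdef, Finset.sum_mul, zero_smul]
    apply Finset.sum_eq_zero
    intro i _
    rw [smul_mul_assoc, heq0 i, zero_smul, smul_zero]
  have hqx : q * x = (0:ℂ) • q := by
    rw [hxdef, Finset.mul_sum, zero_smul]
    apply Finset.sum_eq_zero
    intro i _
    rw [mul_smul_comm, hqe0 i, zero_smul, smul_zero]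
  have hei : ∀ i : Fin m, e i * e i = (1:ℂ) • e i := by
    intro i; rw [(he i).eq, one_smul]
  -- corner equalities
  -- (1) e i * Δ x * e j = e i * R * e j
  have C1 : ∀ i j : Fin m, e i * Δ x * e j = e i * R * e j := by
    intro i j
    have hR : e i * R * e j = ∑ k, lam k • (e i * Δ (e k) * e j) := by
      rw [hRdef, Finset.mul_sum, Finset.sum_mul]
      refine Finset.sum_congr rfl fun k _ => ?_
      rw [mul_smul_comm, smul_mul_assoc]
    by_cases hij : i = j
    · subst hij
      obtain ⟨a, hax, -⟩ := hΔ x x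
      have hL : e i * Δ x * e i = 0 := by
        rw [hax, corner_eq _ _ _ _ (lam i) (lam i) (h1 i) (h2 i), sub_self, zero_smul]
      rw [hL, hR]
      apply (Finset.sum_eq_zero ?_).symm
      intro k _
      obtain ⟨c, hck, -⟩ := hΔ (e k) (e k)
      by_cases hk : k = i
      · subst hk
        rw [hck, corner_eq _ _ _ _ (1:ℂ) 1 (hei k) (hei k), sub_self, zero_smul, smul_zero]
      · rw [hck,
          corner_eq _ _ _ _ (0:ℂ) 0 (heeL i k fun h => hk h.symm) (heeR k i hk),
          sub_self, zero_smul, smul_zero]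
    · obtain ⟨a, hax, hai⟩ := hΔ x (e i)
      obtain ⟨b, hbi, hbj⟩ := hΔ (e i) (e j)
      have hL : e i * Δ x * e j = (lam j - lam i) • (e i * (a * e j)) := by
        rw [hax]; exact corner_eq _ _ _ _ _ _ (h1 i) (h2 j)
      have hA : e i * Δ (e i) * e j = ((0:ℂ) - 1) • (e i * (a * e j)) := by
        rw [hai]
        exact corner_eq _ _ _ _ _ _ (hei i) (heeR i j hij)
      have hB : e i * Δ (e i) * e j = ((0:ℂ) - 1) • (e i * (b * e j)) := by
        rw [hbi]
        exact corner_eq _ _ _ _ _ _ (hei i) (heeR i j hij)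
      have hab : e i * (b * e j) = e i * (a * e j) := by
        have := hA.symm.trans hB
        simpa using this.symm
      have hJ : e i * Δ (e j) * e j = ((1:ℂ) - 0) • (e i * (a * e j)) := by
        rw [hbj, corner_eq _ _ _ _ _ _ (heeL i j hij) (hei j), hab]
      have hzero : ∀ k ∈ (Finset.univ : Finset (Fin m)), k ∉ ({i, j} : Finset (Fin m)) →
          lam k • (e i * Δ (e k) * e j) = 0 := by
        intro k _ hk
        simp only [Finset.mem_insert, Finset.mem_singleton, not_or] at hk
        obtain ⟨c, hck, -⟩ := hΔ (e k) (e k)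
        rw [hck,
          corner_eq _ _ _ _ (0:ℂ) 0 (heeL i k fun h => hk.1 h.symm)
            (heeR k j hk.2),
          sub_self, zero_smul, smul_zero]
      rw [hL, hR]
      rw [← Finset.sum_subset (Finset.subset_univ ({i, j} : Finset (Fin m))) hzero]
      rw [Finset.sum_pair hij, hA, hJ, smul_smul, smul_smul, ← add_smul]
      congr 1
      ring
  -- (2) e i * Δ x * q = e i * R * q
  have C2 : ∀ i : Fin m, e i * Δ x * q = e i * R * q := by
    intro i
    obtain ⟨a, hax, hai⟩ := hΔ x (e i)
    have hL : e i * Δ x * q = ((0:ℂ) - lam i) • (e i * (a * q)) := by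
      rw [hax]; exact corner_eq _ _ _ _ _ _ (h1 i) hxq
    have hA : e i * Δ (e i) * q = ((0:ℂ) - 1) • (e i * (a * q)) := by
      rw [hai]; exact corner_eq _ _ _ _ _ _ (hei i) (heq0 i)
    have hR : e i * R * q = ∑ k, lam k • (e i * Δ (e k) * q) := by
      rw [hRdef, Finset.mul_sum, Finset.sum_mul]
      refine Finset.sum_congr rfl fun k _ => ?_
      rw [mul_smul_comm, smul_mul_assoc]
    rw [hL, hR, Finset.sum_eq_single i]
    · rw [hA, smul_smul]; congr 1; ring
    · intro k _ hk
      obtain ⟨c, hck, -⟩ := hΔ (e k) (e k)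
      rw [hck,
        corner_eq _ _ _ _ (0:ℂ) 0 (heeL i k fun h => hk h.symm) (heq0 k),
        sub_self, zero_smul, smul_zero]
    · intro h; exact absurd (Finset.mem_univ i) h
  -- (3) q * Δ x * e j = q * R * e j
  have C3 : ∀ j : Fin m, q * Δ x * e j = q * R * e j := by
    intro j
    obtain ⟨a, hax, haj⟩ := hΔ x (e j)
    have hL : q * Δ x * e j = (lam j - 0) • (q * (a * e j)) := by
      rw [hax]; exact corner_eq _ _ _ _ _ _ hqx (h2 j)
    have hA : q * Δ (e j) * e j = ((1:ℂ) - 0) • (q * (a * e j)) := by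
      rw [haj]; exact corner_eq _ _ _ _ _ _ (hqe0 j) (hei j)
    have hR : q * R * e j = ∑ k, lam k • (q * Δ (e k) * e j) := by
      rw [hRdef, Finset.mul_sum, Finset.sum_mul]
      refine Finset.sum_congr rfl fun k _ => ?_
      rw [mul_smul_comm, smul_mul_assoc]
    rw [hL, hR, Finset.sum_eq_single j]
    · rw [hA, smul_smul]; congr 1; ring
    · intro k _ hk
      obtain ⟨c, hck, -⟩ := hΔ (e k) (e k)
      rw [hck,
        corner_eq _ _ _ _ (0:ℂ) 0 (hqe0 k) (heeR k j hk),
        sub_self, zero_smul, smul_zero]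
    · intro h; exact absurd (Finset.mem_univ j) h
  -- (4) q * Δ x * q = q * R * q
  have C4 : q * Δ x * q = q * R * q := by
    obtain ⟨a, hax, -⟩ := hΔ x x
    have hL : q * Δ x * q = 0 := by
      rw [hax, corner_eq _ _ _ _ (0:ℂ) 0 hqx hxq, sub_self, zero_smul]
    have hR : q * R * q = ∑ k, lam k • (q * Δ (e k) * q) := by
      rw [hRdef, Finset.mul_sum, Finset.sum_mul]
      refine Finset.sum_congr rfl fun k _ => ?_
      rw [mul_smul_comm, smul_mul_assoc]
    rw [hL, hR]
    apply (Finset.sum_eq_zero ?_).symm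
    intro k _
    obtain ⟨c, hck, -⟩ := hΔ (e k) (e k)
    rw [hck, corner_eq _ _ _ _ (0:ℂ) 0 (hqe0 k) (heq0 k), sub_self, zero_smul, smul_zero]
  -- assembly
  have hpq : p + q = 1 := by rw [hqdef]; abel
  have rowP : ∀ D : A, p * D * p = ∑ i, ∑ j, e i * D * e j := by
    intro D
    rw [hpdef, Finset.sum_mul, Finset.sum_mul]
    refine Finset.sum_congr rfl fun i _ => ?_
    rw [Finset.mul_sum]
  have rowQ : ∀ D : A, p * D * q = ∑ i, e i * D * q := by
    intro D; rw [hpdef, Finset.sum_mul, Finset.sum_mul]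
  have colQ : ∀ D : A, q * D * p = ∑ j, q * D * e j := by
    intro D; rw [hpdef, Finset.mul_sum]
  have expand : ∀ D : A, D = p * D * p + p * D * q + q * D * p + q * D * q := by
    intro D
    have h : (p + q) * D * (p + q) = p * D * p + p * D * q + q * D * p + q * D * q := by
      noncomm_ring
    rw [← h, hpq, one_mul, mul_one]
  calc Δ x = p * Δ x * p + p * Δ x * q + q * Δ x * p + q * Δ x * q := expand _
    _ = p * R * p + p * R * q + q * R * p + q * R * q := by
        rw [rowP, rowP, rowQ, rowQ, colQ, colQ, C4]
        congr 1
        congr 1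
        congr 1
        · exact Finset.sum_congr rfl fun i _ => Finset.sum_congr rfl fun j _ => C1 i j
        · exact Finset.sum_congr rfl fun i _ => C2 i
        · exact Finset.sum_congr rfl fun j _ => C3 j
    _ = R := (expand R).symm
end

section
/- Let A be a C*-algebra, Δ : A → A a 2-local derivation, and f a bounded linear functional on A. Then the restriction of f ∘ Δ to the set of projections of A is finitely additive: for orthogonal projections e₁, e₂ one has (f ∘ Δ)(e₁ + e₂) = (f ∘ Δ)(e₁) + (f ∘ Δ)(e₂). -/
theorem smul_add_smul_eq_of_isIdempotentElem_of_mul_eq_zero {K A : Type*} [Field K] [CharZero K]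
    [Ring A] [Algebra K A] {p q : A} (hp : IsIdempotentElem p) (hq : IsIdempotentElem q)
    (hpq : p * q = 0) (hqp : q * p = 0) (a b : K) :
    a • p + b • q = (2 * a - b / 2) • (p + (2 : K) • q)
      + (b / 2 - a) • ((p + (2 : K) • q) * (p + (2 : K) • q)) := by
  have hsq : (p + (2 : K) • q) * (p + (2 : K) • q) = p + (4 : K) • q := by
    simp only [add_mul, mul_add, mul_smul_comm, smul_mul_assoc, hp.eq, hq.eq, hpq, hqp,
      smul_zero, add_zero, zero_add, smul_smul]
    norm_num
  rw [hsq]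
  module

section

variable {A : Type*} [Ring A] [Algebra ℂ A]

theorem IsDerivation.map_smul_add_smul_mul_self {D : A → A} (hD : IsDerivation D) (a b : ℂ)
    (v : A) : D (a • v + b • (v * v)) = a • D v + b • (D v * v + v * D v) := by
  rw [hD.1, hD.2.1, hD.2.1, hD.2.2]

theorem Is2LocalDerivation.map_smul_add_smul_mul_self {Δ : A → A} (hΔ : Is2LocalDerivation Δ)
    (a b : ℂ) (v : A) : Δ (a • v + b • (v * v)) = a • Δ v + b • (Δ v * v + v * Δ v) := by
  obtain ⟨D, hD, hx, hv⟩ := hΔ (a • v + b • (v * v)) v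
  rw [hx, hv, hD.map_smul_add_smul_mul_self]

theorem Is2LocalDerivation.map_smul_add_smul_of_isIdempotentElem {Δ : A → A}
    (hΔ : Is2LocalDerivation Δ) {p q : A} (hp : IsIdempotentElem p) (hq : IsIdempotentElem q)
    (hpq : p * q = 0) (hqp : q * p = 0) (a b : ℂ) :
    Δ (a • p + b • q) = a • Δ p + b • Δ q := by
  set v := p + (2 : ℂ) • q
  have hspan (a b : ℂ) :
      Δ (a • p + b • q) = (2 * a - b / 2) • Δ v + (b / 2 - a) • (Δ v * v + v * Δ v) := by
    rw [smul_add_smul_eq_of_isIdempotentElem_of_mul_eq_zero hp hq hpq hqp,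
      hΔ.map_smul_add_smul_mul_self]
  have hΔp := hspan 1 0
  have hΔq := hspan 0 1
  rw [one_smul, zero_smul, add_zero] at hΔp
  rw [one_smul, zero_smul, zero_add] at hΔq
  rw [hspan, hΔp, hΔq]
  module

theorem Is2LocalDerivation.map_add_of_isIdempotentElem {Δ : A → A} (hΔ : Is2LocalDerivation Δ)
    {p q : A} (hp : IsIdempotentElem p) (hq : IsIdempotentElem q) (hpq : p * q = 0)
    (hqp : q * p = 0) : Δ (p + q) = Δ p + Δ q := by
  simpa only [one_smul] using hΔ.map_smul_add_smul_of_isIdempotentElem hp hq hpq hqp 1 1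

end

theorem functional_comp_twoLocalDerivation_is_signed_measure_general
    {A : Type*} [NormedRing A] [StarRing A]
    [NormedAlgebra ℂ A]
    (Δ : A → A) (hΔ : Is2LocalDerivation Δ) (f : A →L[ℂ] ℂ)
    (e₁ e₂ : A) (h₁ : IsIdempotentElem e₁ ∧ star e₁ = e₁)
    (h₂ : IsIdempotentElem e₂ ∧ star e₂ = e₂) (horth : e₁ * e₂ = 0) :
    f (Δ (e₁ + e₂)) = f (Δ e₁) + f (Δ e₂) := by
  have horth' : e₂ * e₁ = 0 := by
    simpa only [star_mul, h₁.2, h₂.2, star_zero] using congrArg star horth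
  rw [hΔ.map_add_of_isIdempotentElem h₁.1 h₂.1 horth horth', map_add]

theorem functional_comp_twoLocalDerivation_is_signed_measure
    {A : Type*} [NormedRing A] [StarRing A] [CStarRing A] [CompleteSpace A]
    [NormedAlgebra ℂ A] [StarModule ℂ A]
    (Δ : A → A) (hΔ : Is2LocalDerivation Δ) (f : A →L[ℂ] ℂ)
    (e₁ e₂ : A) (h₁ : IsIdempotentElem e₁ ∧ star e₁ = e₁)
    (h₂ : IsIdempotentElem e₂ ∧ star e₂ = e₂) (horth : e₁ * e₂ = 0) :
    f (Δ (e₁ + e₂)) = f (Δ e₁) + f (Δ e₂) :=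
  functional_comp_twoLocalDerivation_is_signed_measure_general Δ hΔ f e₁ e₂ h₁ h₂ horth
end

section
/- Let M = ⊕_j M_j be a C*-direct sum (c₀- or ℓ∞-type product) of C*-algebras M_j, and let Δ : M → M be a 2-local derivation such that the restriction of Δ to each summand M_j (identified with a subalgebra via the central projection z_j) is a derivation on M_j. Then Δ is a derivation on M. -/
open scoped ENNReal

/-!
`Δ x` and `Δ y` are given by one inner derivation `[d, ·]`, and evaluation at a coordinate `j`
is multiplicative, so `(Δ x) j = [d j, x j]` and `(Δ y) j = [d j, y j]`. Hence `(Δ x) j` depends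
only on `x j`, i.e. equals `(Δ (single j (x j))) j`: `Δ` acts coordinatewise through its
restrictions to the summands, which are derivations.
-/

def IsTwoLocalInnerDerivation {A : Type*} [NonUnitalRing A] (Δ : A → A) : Prop :=
  ∀ x y : A, ∃ d : A, Δ x = d * x - x * d ∧ Δ y = d * y - y * d

namespace IsTwoLocalInnerDerivation

theorem map_congr {A B : Type*} [NonUnitalRing A] [NonUnitalRing B] {Δ : A → A}
    (hΔ : IsTwoLocalInnerDerivation Δ) (f : A →ₙ+* B) {x y : A} (h : f x = f y) :
    f (Δ x) = f (Δ y) := by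
  obtain ⟨d, hx, hy⟩ := hΔ x y
  rw [hx, hy, map_sub, map_sub, map_mul, map_mul, map_mul, map_mul, h]

end IsTwoLocalInnerDerivation

namespace lp

variable {ι : Type*} {M : ι → Type*} [∀ j, NonUnitalNormedRing (M j)]

def evalNonUnitalRingHom (j : ι) : lp M ∞ →ₙ+* M j where
  toFun x := x j
  map_mul' _ _ := rfl
  map_zero' := rfl
  map_add' _ _ := rfl

end lp

namespace IsTwoLocalInnerDerivation

variable {ι : Type*} {M : ι → Type*} [∀ j, NonUnitalNormedRing (M j)] {Δ : lp M ∞ → lp M ∞}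

theorem lp_apply_congr (hΔ : IsTwoLocalInnerDerivation Δ)
    {x y : lp M ∞} {j : ι} (h : x j = y j) : Δ x j = Δ y j :=
  hΔ.map_congr (lp.evalNonUnitalRingHom j) h

theorem lp_apply_single_apply_self [DecidableEq ι]
    (hΔ : IsTwoLocalInnerDerivation Δ) (x : lp M ∞) (j : ι) :
    Δ (lp.single ∞ j (x j)) j = Δ x j :=
  hΔ.lp_apply_congr (lp.single_apply_self ∞ j _)

end IsTwoLocalInnerDerivation

theorem twoLocalDerivation_on_cstar_sum_is_derivation_general
    {ι : Type*} (M : ι → Type*)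
    [∀ j, NormedRing (M j)]
    [∀ j, NormedAlgebra ℂ (M j)]
    (Δ : lp M ∞ → lp M ∞)
    -- Δ is a 2-local (inner) derivation
    (h2loc : ∀ x y : lp M ∞, ∃ d : lp M ∞,
      Δ x = d * x - x * d ∧ Δ y = d * y - y * d)
    -- the restriction of Δ to each summand is a derivation
    (hder : ∀ (j : ι) (x y : lp M ∞), (∀ i, i ≠ j → x i = 0) →
      (∀ i, i ≠ j → y i = 0) →
      Δ (x + y) = Δ x + Δ y ∧ Δ (x * y) = Δ x * y + x * Δ y ∧
      ∀ c : ℂ, Δ (c • x) = c • Δ x) :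
    (∀ x y : lp M ∞, Δ (x + y) = Δ x + Δ y) ∧
    (∀ c : ℂ, ∀ x : lp M ∞, Δ (c • x) = c • Δ x) ∧
    (∀ x y : lp M ∞, Δ (x * y) = Δ x * y + x * Δ y) := by
  classical
  have hΔ : IsTwoLocalInnerDerivation Δ := h2loc
  have hs (j : ι) (x : lp M ∞) : ∀ i, i ≠ j → lp.single ∞ j (x j) i = 0 := fun _ hi =>
    lp.single_apply_ne ∞ j _ hi
  refine ⟨fun x y => ?_, fun c x => ?_, fun x y => ?_⟩ <;> ext j
  · obtain ⟨hadd, -, -⟩ := hder j _ _ (hs j x) (hs j y)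
    rw [hΔ.lp_apply_congr (y := lp.single ∞ j (x j) + lp.single ∞ j (y j)) (by simp), hadd]
    simp [hΔ.lp_apply_single_apply_self]
  · obtain ⟨-, -, hsmul⟩ := hder j _ _ (hs j x) (hs j x)
    rw [hΔ.lp_apply_congr (y := c • lp.single ∞ j (x j)) (by simp), hsmul]
    simp [hΔ.lp_apply_single_apply_self]
  · obtain ⟨-, hmul, -⟩ := hder j _ _ (hs j x) (hs j y)
    rw [hΔ.lp_apply_congr (y := lp.single ∞ j (x j) * lp.single ∞ j (y j))
      (by simp [lp.infty_coeFn_mul]), hmul]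
    simp only [lp.coeFn_add, lp.infty_coeFn_mul, Pi.add_apply, Pi.mul_apply, lp.single_apply_self,
      hΔ.lp_apply_single_apply_self]

/-- A 2-local derivation on the C*-direct sum `lp M ∞` of C*-algebras which restricts
to a derivation on each summand is a derivation. -/
theorem twoLocalDerivation_on_cstar_sum_is_derivation
    {ι : Type*} [DecidableEq ι] (M : ι → Type*)
    [∀ j, NormedRing (M j)] [∀ j, StarRing (M j)] [∀ j, CStarRing (M j)]
    [∀ j, NormedAlgebra ℂ (M j)] [∀ j, CompleteSpace (M j)]
    (Δ : lp M ∞ → lp M ∞)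
    -- Δ is a 2-local (inner) derivation
    (h2loc : ∀ x y : lp M ∞, ∃ d : lp M ∞,
      Δ x = d * x - x * d ∧ Δ y = d * y - y * d)
    -- Δ maps each summand into itself
    (hmaps : ∀ (j : ι) (x : lp M ∞), (∀ i, i ≠ j → x i = 0) →
      ∀ i, i ≠ j → (Δ x) i = 0)
    -- the restriction of Δ to each summand is a derivation
    (hder : ∀ (j : ι) (x y : lp M ∞), (∀ i, i ≠ j → x i = 0) →
      (∀ i, i ≠ j → y i = 0) →
      Δ (x + y) = Δ x + Δ y ∧ Δ (x * y) = Δ x * y + x * Δ y ∧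
      ∀ c : ℂ, Δ (c • x) = c • Δ x) :
    (∀ x y : lp M ∞, Δ (x + y) = Δ x + Δ y) ∧
    (∀ c : ℂ, ∀ x : lp M ∞, Δ (c • x) = c • Δ x) ∧
    (∀ x y : lp M ∞, Δ (x * y) = Δ x * y + x * Δ y) :=
  twoLocalDerivation_on_cstar_sum_is_derivation_general M Δ h2loc hder
end

section
/- Let M be a von Neumann algebra (or any unital complex *-algebra in which every derivation is inner and which is semiprime). If Δ : M → M is a 2-local derivation that is additive, then Δ is an inner derivation: there exists a ∈ M with Δ(x) = ax − xa for all x ∈ M. -/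
private lemma two_cancel {M : Type*} [Ring M] [Algebra ℂ M] {t : M} (h : t + t = 0) :
    t = 0 := by
  have h2 : (2 : ℂ) • t = 0 := by rw [two_smul]; exact h
  have h3 : ((2 : ℂ)⁻¹ * 2) • t = 0 := by rw [mul_smul, h2, smul_zero]
  rwa [show ((2:ℂ)⁻¹ * 2) = 1 by norm_num, one_smul] at h3

private lemma semiprime_flip {M : Type*} [Ring M] [Algebra ℂ M]
    (hsp : ∀ a : M, (∀ x : M, a * x * a = 0) → a = 0)
    (a b : M) (h : ∀ m : M, a * m * b = 0) : ∀ m : M, b * m * a = 0 := by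
  intro m
  apply hsp
  intro t
  have e : b * m * a * t * (b * m * a) = b * m * (a * t * b) * m * a := by noncomm_ring
  rw [e, h t]
  simp

private lemma semiprime_anti {M : Type*} [Ring M] [Algebra ℂ M]
    (hsp : ∀ a : M, (∀ x : M, a * x * a = 0) → a = 0)
    (a b : M) (h : ∀ m : M, a * m * b + b * m * a = 0) : ∀ m : M, a * m * b = 0 := by
  have step1 : ∀ x y : M, a * x * a * y * b = 0 := by
    intro x y
    have e1 := h (x * a * y)
    have e2 := h y
    have e3 := h x
    have k : a * x * a * y * b + a * x * a * y * b
        = (a * (x * a * y) * b + b * (x * a * y) * a)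
          + (a * x * (a * y * b + b * y * a) - (a * x * b + b * x * a) * (y * a)) := by
      noncomm_ring
    rw [e1, e2, e3] at k
    simp only [mul_zero, zero_mul, sub_zero, add_zero, zero_add] at k
    exact two_cancel k
  intro m
  apply hsp
  intro z
  have e : a * m * b * z * (a * m * b)
      = a * m * (a * z * b + b * z * a) * m * b - a * m * a * z * b * (m * b) := by
    noncomm_ring
  rw [h z, step1 m z] at e
  simpa using e

private lemma step_lin {M : Type*} [Ring M] [Algebra ℂ M]
    (hsp : ∀ a : M, (∀ x : M, a * x * a = 0) → a = 0)
    {G1 G2 c1 c2 : M}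
    (h11 : ∀ z : M, G1 * z * c1 = 0)
    (h22 : ∀ z : M, G2 * z * c2 = 0)
    (hsum : ∀ z : M, (G1 + G2) * z * (c1 + c2) = 0) :
    ∀ z : M, G1 * z * c2 = 0 := by
  have h3 : ∀ z : M, G1 * z * c2 + G2 * z * c1 = 0 := by
    intro z
    have e : G1 * z * c2 + G2 * z * c1
        = (G1 + G2) * z * (c1 + c2) - G1 * z * c1 - G2 * z * c2 := by noncomm_ring
    rw [e, hsum z, h11 z, h22 z]
    simp
  have h11' := semiprime_flip hsp _ _ h11
  intro z
  apply hsp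
  intro t
  have e : G1 * z * c2 * t * (G1 * z * c2)
      = (G1 * z * c2 + G2 * z * c1) * t * (G1 * z * c2)
        - G2 * z * (c1 * t * G1) * (z * c2) := by noncomm_ring
  rw [e, h3 z, h11' t]
  simp

theorem additive_twoLocalDerivation_is_inner
    {M : Type*} [Ring M] [Algebra ℂ M] [StarRing M]
    (hsp : ∀ a : M, (∀ x : M, a * x * a = 0) → a = 0)
    (hinner : ∀ D : M → M, IsDerivation D → ∃ a : M, ∀ x : M, D x = a * x - x * a)
    (Δ : M → M) (hΔ : Is2LocalDerivation Δ)
    (hadd : ∀ x y : M, Δ (x + y) = Δ x + Δ y) :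
    ∃ a : M, ∀ x : M, Δ x = a * x - x * a := by
  -- homogeneity
  have hlin : ∀ (c : ℂ) (x : M), Δ (c • x) = c • Δ x := by
    intro c x
    obtain ⟨D, ⟨hD1, hD2, hD3⟩, h1, h2⟩ := hΔ x (c • x)
    rw [h2, hD2, ← h1]
  -- Jordan property
  have hJ : ∀ x : M, Δ (x * x) = Δ x * x + x * Δ x := by
    intro x
    obtain ⟨D, ⟨hD1, hD2, hD3⟩, h1, h2⟩ := hΔ x (x * x)
    rw [h2, hD3 x x, ← h1]
  -- polarized Jordan
  have hP : ∀ x y : M, Δ (x*y + y*x) = Δ x * y + x * Δ y + Δ y * x + y * Δ x := by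
    intro x y
    have e := hJ (x + y)
    rw [show (x+y)*(x+y) = x*x + (x*y + y*x) + y*y from by noncomm_ring] at e
    rw [hadd, hadd, hadd x y] at e
    rw [hJ x, hJ y] at e
    rw [← sub_eq_zero] at e
    rw [← sub_eq_zero, ← e]
    noncomm_ring
  -- Jordan triple identity d(ubu)
  have T1 : ∀ u b : M, Δ (u*b*u) = Δ u * b * u + u * Δ b * u + u * b * Δ u := by
    intro u b
    have h1 := hP u (u*b + b*u)
    rw [hP u b] at h1
    rw [show u*(u*b+b*u) + (u*b+b*u)*u = ((u*u)*b + b*(u*u)) + (u*b*u + u*b*u)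
        from by noncomm_ring] at h1
    rw [hadd, hP (u*u) b, hJ u] at h1
    rw [hadd (u*b*u) (u*b*u)] at h1
    have key : (Δ (u*b*u) - (Δ u * b * u + u * Δ b * u + u * b * Δ u))
        + (Δ (u*b*u) - (Δ u * b * u + u * Δ b * u + u * b * Δ u)) = 0 := by
      rw [← sub_eq_zero] at h1
      rw [← h1]
      noncomm_ring
    exact sub_eq_zero.mp (two_cancel key)
  -- linearized triple identity
  have T2 : ∀ u v b : M, Δ (u*b*v + v*b*u)
      = Δ u * b * v + u * Δ b * v + u * b * Δ v + Δ v * b * u + v * Δ b * u + v * b * Δ u := by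
    intro u v b
    have h1 := T1 (u+v) b
    rw [show (u+v)*b*(u+v) = (u*b*u + v*b*v) + (u*b*v + v*b*u) from by noncomm_ring] at h1
    rw [hadd, hadd, T1 u b, T1 v b, hadd u v] at h1
    rw [← sub_eq_zero] at h1
    rw [← sub_eq_zero, ← h1]
    noncomm_ring
  -- Bresar's Lemma 1.1 : G z c + c z G = 0
  have L1 : ∀ x y z : M,
      (Δ (x*y) - Δ x * y - x * Δ y) * z * (x*y - y*x)
        + (x*y - y*x) * z * (Δ (x*y) - Δ x * y - x * Δ y) = 0 := by
    intro x y z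
    have hyx : Δ (y*x) = Δ x * y + x * Δ y + Δ y * x + y * Δ x - Δ (x*y) := by
      have h := hP x y
      rw [hadd] at h
      rw [← sub_eq_zero] at h
      rw [← sub_eq_zero, ← h]
      noncomm_ring
    have hA := T2 (x*y) (y*x) z
    rw [hyx] at hA
    rw [show (x*y)*z*(y*x) + (y*x)*z*(x*y) = x*(y*z*y)*x + y*(x*z*x)*y
        from by noncomm_ring] at hA
    have hB := hadd (x*(y*z*y)*x) (y*(x*z*x)*y)
    rw [T1 x (y*z*y), T1 y (x*z*x), T1 y z, T1 x z] at hB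
    have hBA := hB.symm.trans hA
    rw [← sub_eq_zero] at hBA
    rw [← hBA]
    noncomm_ring
  -- Lemma 1.2 : G z c = 0
  have L2 : ∀ x y z : M, (Δ (x*y) - Δ x * y - x * Δ y) * z * (x*y - y*x) = 0 := by
    intro x y
    exact semiprime_anti hsp _ _ (L1 x y)
  -- linearize in first variable
  have L3 : ∀ x y u z : M, (Δ (x*y) - Δ x * y - x * Δ y) * z * (u*y - y*u) = 0 := by
    intro x y u
    have hGadd : Δ ((x+u)*y) - Δ (x+u) * y - (x+u) * Δ y
        = (Δ (x*y) - Δ x * y - x * Δ y) + (Δ (u*y) - Δ u * y - u * Δ y) := by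
      rw [show (x+u)*y = x*y + u*y from by noncomm_ring, hadd, hadd]
      noncomm_ring
    refine step_lin hsp (L2 x y) (L2 u y) ?_
    intro z
    have h := L2 (x+u) y z
    rw [hGadd, show (x+u)*y - y*(x+u) = (x*y - y*x) + (u*y - y*u)
        from by noncomm_ring] at h
    exact h
  -- linearize in second variable
  have L4 : ∀ x y u v z : M, (Δ (x*y) - Δ x * y - x * Δ y) * z * (u*v - v*u) = 0 := by
    intro x y u v
    have hGadd : Δ (x*(y+v)) - Δ x * (y+v) - x * Δ (y+v)
        = (Δ (x*y) - Δ x * y - x * Δ y) + (Δ (x*v) - Δ x * v - x * Δ v) := by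
      rw [show x*(y+v) = x*y + x*v from by noncomm_ring, hadd, hadd]
      noncomm_ring
    refine step_lin hsp (L3 x y u) (L3 x v u) ?_
    intro z
    have h := L3 x (y+v) u z
    rw [hGadd, show u*(y+v) - (y+v)*u = (u*y - y*u) + (u*v - v*u)
        from by noncomm_ring] at h
    exact h
  -- Leibniz rule
  have leib : ∀ x y : M, Δ (x*y) = Δ x * y + x * Δ y := by
    intro x y
    have hxy : ∃ a : M, Δ (x*y) = a * (x*y) - (x*y) * a := by
      obtain ⟨D, hD, h1, h2⟩ := hΔ (x*y) (x*y)
      obtain ⟨a, ha⟩ := hinner D hD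
      exact ⟨a, by rw [h1, ha]⟩
    have hx : ∃ b : M, Δ x = b * x - x * b := by
      obtain ⟨D, hD, h1, h2⟩ := hΔ x x
      obtain ⟨b, hb⟩ := hinner D hD
      exact ⟨b, by rw [h1, hb]⟩
    have hy : ∃ c : M, Δ y = c * y - y * c := by
      obtain ⟨D, hD, h1, h2⟩ := hΔ y y
      obtain ⟨c, hc⟩ := hinner D hD
      exact ⟨c, by rw [h1, hc]⟩
    obtain ⟨a, ha⟩ := hxy
    obtain ⟨b, hb⟩ := hx
    obtain ⟨c2, hc⟩ := hy
    have hzero : Δ (x*y) - Δ x * y - x * Δ y = 0 := by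
      apply hsp
      intro z
      calc (Δ (x*y) - Δ x * y - x * Δ y) * z * (Δ (x*y) - Δ x * y - x * Δ y)
          = (Δ (x*y) - Δ x * y - x * Δ y) * z * Δ (x*y)
            - ((Δ (x*y) - Δ x * y - x * Δ y) * z * Δ x) * y
            - (Δ (x*y) - Δ x * y - x * Δ y) * (z * x) * Δ y := by noncomm_ring
        _ = (Δ (x*y) - Δ x * y - x * Δ y) * z * (a * (x*y) - (x*y) * a)
            - ((Δ (x*y) - Δ x * y - x * Δ y) * z * (b * x - x * b)) * y
            - (Δ (x*y) - Δ x * y - x * Δ y) * (z * x) * (c2 * y - y * c2) := by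
            rw [ha, hb, hc]
        _ = 0 := by
            rw [L4 x y a (x*y) z, L4 x y b x z, L4 x y c2 y (z*x)]
            simp
    rw [← sub_eq_zero, ← hzero]
    noncomm_ring
  exact hinner Δ ⟨hadd, hlin, leib⟩
end

section
/- Let A = M_n(ℂ), n ≥ 3, and let Δ : A → A be a map such that for every pair x, y ∈ A there exists d ∈ A with Δ(x) = dx − xd and Δ(y) = dy − yd. Then there exists a ∈ A such that Δ(x) = ax − xa for all x ∈ A; in particular Δ is a derivation. -/
/-!
Pairing `x` with `y` in the trace form gives `tr (Δ x * y) = - tr (x * Δ y)`, and since the trace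
form is nondegenerate this forces `Δ` to be linear. Choose `a` implementing `Δ` simultaneously on
a diagonal matrix `p` with distinct entries and on the all-ones matrix `J`; then `D := Δ - ad a`
is again 2-local and kills `p` and `J`. Any `d` implementing `D` at `x` and at `p` commutes with
`p`, so it is diagonal and `(D x) k l = (d k k - d l l) * x k l`: the entry of `D x` vanishes
wherever that of `x` does. Applied to `x - x k l • J` and combined with linearity and `D J = 0`,
this gives `(D x) k l = 0`.
-/

open Function

namespace Matrix

variable {m R : Type*} [Fintype m] [CommRing R]

theorem isDiag_of_commute_diagonal [DecidableEq m] [NoZeroDivisors R] {f : m → R}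
    (hf : Injective f) {d : Matrix m m R} (h : Commute d (diagonal f)) : d.IsDiag := by
  intro i j hij
  have hij' : d i j * f j = f i * d i j := by
    simpa only [mul_diagonal, diagonal_mul] using congr_fun₂ h.eq i j
  have : (f i - f j) * d i j = 0 := by linear_combination -hij'
  exact (mul_eq_zero.1 this).resolve_left (sub_ne_zero.2 (hf.ne hij))

theorem diagonal_mul_sub_mul_diagonal_apply [DecidableEq m] (g : m → R) (x : Matrix m m R)
    (k l : m) : (diagonal g * x - x * diagonal g) k l = (g k - g l) * x k l := by
  simp only [sub_apply, diagonal_mul, mul_diagonal]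
  ring

def IsTwoLocalDerivation (Δ : Matrix m m R → Matrix m m R) : Prop :=
  ∀ x y, ∃ d : Matrix m m R, Δ x = d * x - x * d ∧ Δ y = d * y - y * d

namespace IsTwoLocalDerivation

variable {Δ : Matrix m m R → Matrix m m R}

theorem trace_map_mul_eq_neg (hΔ : IsTwoLocalDerivation Δ) (x y : Matrix m m R) :
    (Δ x * y).trace = -(x * Δ y).trace := by
  obtain ⟨d, hx, hy⟩ := hΔ x y
  rw [hx, hy]
  simp only [sub_mul, mul_sub, trace_sub, Matrix.mul_assoc]
  rw [trace_mul_comm d (x * y), Matrix.mul_assoc]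
  ring

theorem map_add (hΔ : IsTwoLocalDerivation Δ) (x y : Matrix m m R) :
    Δ (x + y) = Δ x + Δ y := by
  classical
  refine ext_iff_trace_mul_right.2 fun z => ?_
  simp only [add_mul, trace_add, hΔ.trace_map_mul_eq_neg]
  ring

theorem map_smul (hΔ : IsTwoLocalDerivation Δ) (r : R) (x : Matrix m m R) :
    Δ (r • x) = r • Δ x := by
  classical
  refine ext_iff_trace_mul_right.2 fun z => ?_
  simp only [smul_mul, trace_smul, hΔ.trace_map_mul_eq_neg, smul_eq_mul]
  ring

theorem map_sub (hΔ : IsTwoLocalDerivation Δ) (x y : Matrix m m R) :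
    Δ (x - y) = Δ x - Δ y :=
  eq_sub_of_add_eq (by rw [← hΔ.map_add, sub_add_cancel])

theorem sub_commutator (hΔ : IsTwoLocalDerivation Δ) (a : Matrix m m R) :
    IsTwoLocalDerivation fun x => Δ x - (a * x - x * a) := fun x y => by
  obtain ⟨d, hx, hy⟩ := hΔ x y
  exact ⟨d - a, by simp only [hx]; noncomm_ring, by simp only [hy]; noncomm_ring⟩

theorem apply_eq_zero_of_apply_eq_zero [DecidableEq m] [NoZeroDivisors R]
    (hΔ : IsTwoLocalDerivation Δ) {f : m → R} (hf : Injective f) (hf0 : Δ (diagonal f) = 0)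
    {x : Matrix m m R} {k l : m} (hx : x k l = 0) : Δ x k l = 0 := by
  obtain ⟨d, hdx, hdf⟩ := hΔ x (diagonal f)
  have hd : d.IsDiag := isDiag_of_commute_diagonal hf (sub_eq_zero.1 (hf0 ▸ hdf).symm)
  rw [hdx, ← hd.diagonal_diag, diagonal_mul_sub_mul_diagonal_apply, hx, mul_zero]

theorem eq_zero_of_map_diagonal_eq_zero_of_map_ones_eq_zero [DecidableEq m] [NoZeroDivisors R]
    (hΔ : IsTwoLocalDerivation Δ) {f : m → R} (hf : Injective f) (hf0 : Δ (diagonal f) = 0)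
    (hJ : Δ (of fun _ _ => 1) = 0) (x : Matrix m m R) : Δ x = 0 := by
  ext k l
  have hkl : (x - x k l • of fun _ _ => (1 : R) : Matrix m m R) k l = 0 := by simp
  have := hΔ.apply_eq_zero_of_apply_eq_zero hf hf0 hkl
  rwa [hΔ.map_sub, hΔ.map_smul, hJ, smul_zero, sub_zero] at this

end IsTwoLocalDerivation

end Matrix

theorem twoLocalDerivation_matrix_algebra_is_inner_general
    {n : ℕ}
    (Δ : Matrix (Fin n) (Fin n) ℂ → Matrix (Fin n) (Fin n) ℂ)
    (h2loc : ∀ x y : Matrix (Fin n) (Fin n) ℂ, ∃ d : Matrix (Fin n) (Fin n) ℂ,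
      Δ x = d * x - x * d ∧ Δ y = d * y - y * d) :
    ∃ a : Matrix (Fin n) (Fin n) ℂ,
      ∀ x : Matrix (Fin n) (Fin n) ℂ, Δ x = a * x - x * a := by
  obtain ⟨a, hap, haJ⟩ :=
    h2loc (Matrix.diagonal fun i => (i : ℂ)) (Matrix.of fun _ _ => 1)
  have hD := Matrix.IsTwoLocalDerivation.sub_commutator h2loc a
  exact ⟨a, fun x => sub_eq_zero.1 <|
    hD.eq_zero_of_map_diagonal_eq_zero_of_map_ones_eq_zero
      (Nat.cast_injective.comp Fin.val_injective) (sub_eq_zero.2 hap) (sub_eq_zero.2 haJ) x⟩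

theorem twoLocalDerivation_matrix_algebra_is_inner
    {n : ℕ} (hn : 3 ≤ n)
    (Δ : Matrix (Fin n) (Fin n) ℂ → Matrix (Fin n) (Fin n) ℂ)
    (h2loc : ∀ x y : Matrix (Fin n) (Fin n) ℂ, ∃ d : Matrix (Fin n) (Fin n) ℂ,
      Δ x = d * x - x * d ∧ Δ y = d * y - y * d) :
    ∃ a : Matrix (Fin n) (Fin n) ℂ,
      ∀ x : Matrix (Fin n) (Fin n) ℂ, Δ x = a * x - x * a :=
  twoLocalDerivation_matrix_algebra_is_inner_general Δ h2loc
end
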